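/- arXiv:2012.06794 — 2 statements merged into one kernel-verified Lean document; each statement's English description precedes it below -/
import Mathlib

section
/- For every cardinal κ ≥ 1, the space 𝔾𝕊_κ' (the κ-fold Griffiths space with all cone tips removed) strongly deformation retracts onto 𝔼_κ: there is a continuous map H : 𝔾𝕊_κ' × [0,1] → 𝔾𝕊_κ' with H(x,0) = x for all x, H(x,1) ∈ 𝔼_κ for all x, and H(e,s) = e for all e ∈ 𝔼_κ and all s ∈ [0,1]. -/
noncomputable section

open Set

namespace Griffiths

/-- The one-fold Griffiths cone over the Hawaiian earring, as a subset of Euclidean 3-space: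
the union over heights `r ∈ [0,1]` and `n ∈ ℕ` of the circle at height `r` with center
`(0, (1-r)/(n+3))` and radius `(1-r)/(n+3)` (the geodesic cone over the Hawaiian earring
`𝔼 × {0}` with cone tip `(0,0,1)`). -/
def GS1set : Set (EuclideanSpace ℝ (Fin 3)) :=
  ⋃ r ∈ Set.Icc (0 : ℝ) 1, ⋃ n : ℕ,
    {x | x 0 ^ 2 + (x 1 - (1 - r) / (n + 3)) ^ 2 = ((1 - r) / (n + 3)) ^ 2 ∧ x 2 = r}

lemma zero_mem_GS1set : (0 : EuclideanSpace ℝ (Fin 3)) ∈ GS1set := by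
  have h0 : (0:ℝ) ∈ Set.Icc (0:ℝ) 1 := by norm_num
  refine Set.mem_biUnion h0 (Set.mem_iUnion.2 ⟨0, ?_, ?_⟩) <;> simp

/-- The relation identifying the copies of the origin `(0,0,0)` in the disjoint union of
`ι`-many copies of `𝔾𝕊₁`. -/
def wedgeSetoid (ι : Type) : Setoid (Σ _ : ι, GS1set) where
  r x y := x = y ∨ (x.2.val = 0 ∧ y.2.val = 0)
  iseqv := by
    constructor
    · intro x; exact Or.inl rfl
    · rintro x y (rfl | h); exacts [Or.inl rfl, Or.inr ⟨h.2, h.1⟩]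
    · rintro x y z (rfl | h) (rfl | h')
      · exact Or.inl rfl
      · exact Or.inr h'
      · exact Or.inr h
      · exact Or.inr ⟨h.1, h'.2⟩

/-- The `ι`-fold Griffiths space: the wedge of `ι`-many copies of `𝔾𝕊₁` at the point
`(0,0,0)`. -/
def GS (ι : Type) : Type := Quotient (wedgeSetoid ι)

/-- The wedge metric on representatives. -/
def preDist {ι : Type} (x y : Σ _ : ι, GS1set) : ℝ :=
  @ite _ (x.1 = y.1) (Classical.dec _)
    (dist (x.2.val) (y.2.val))
    (dist (x.2.val) 0 + dist (0 : EuclideanSpace ℝ (Fin 3)) (y.2.val))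

lemma preDist_wd {ι : Type} (x y x' y' : Σ _ : ι, GS1set)
    (hx : (wedgeSetoid ι).r x x') (hy : (wedgeSetoid ι).r y y') :
    preDist x y = preDist x' y' := by
  classical
  have key : ∀ a b c : Σ _ : ι, GS1set, a.2.val = 0 → b.2.val = 0 →
      preDist a c = preDist b c := by
    intro a b c ha hb
    unfold preDist
    by_cases h1 : a.1 = c.1 <;> by_cases h2 : b.1 = c.1 <;>
      simp [h1, h2, ha, hb, dist_comm]
  have symmkey : ∀ a c d : Σ _ : ι, GS1set, c.2.val = 0 → d.2.val = 0 →
      preDist a c = preDist a d := by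
    intro a c d hc hd
    unfold preDist
    by_cases h1 : a.1 = c.1 <;> by_cases h2 : a.1 = d.1 <;>
      simp [h1, h2, hc, hd]
  rcases hx with rfl | hx
  · rcases hy with rfl | hy
    · rfl
    · exact symmkey _ _ _ hy.1 hy.2
  · rcases hy with rfl | hy
    · exact key _ _ _ hx.1 hx.2
    · rw [key _ x' _ hx.1 hx.2, symmkey _ _ _ hy.1 hy.2]

instance GSMetric (ι : Type) : MetricSpace (GS ι) where
  dist := Quotient.lift₂ preDist fun a₁ b₁ a₂ b₂ h₁ h₂ => preDist_wd a₁ b₁ a₂ b₂ h₁ h₂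
  dist_self := by
    rintro ⟨x⟩
    show preDist x x = 0
    simp [preDist]
  dist_comm := by
    rintro ⟨x⟩ ⟨y⟩
    show preDist x y = preDist y x
    unfold preDist
    by_cases h : x.1 = y.1
    · rw [if_pos h, if_pos h.symm, dist_comm]
    · have h' : ¬ y.1 = x.1 := fun hh => h hh.symm
      rw [if_neg h, if_neg h', dist_comm (x.2.val) (0 : EuclideanSpace ℝ (Fin 3)),
        dist_comm ((0 : EuclideanSpace ℝ (Fin 3))) (y.2.val)]
      ring
  dist_triangle := by
    rintro ⟨x⟩ ⟨y⟩ ⟨z⟩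
    show preDist x z ≤ preDist x y + preDist y z
    unfold preDist
    have t3 := dist_triangle (x.2.val) (y.2.val) (z.2.val)
    have txy0 := dist_triangle (x.2.val) (y.2.val) (0 : EuclideanSpace ℝ (Fin 3))
    have t0yz := dist_triangle (0 : EuclideanSpace ℝ (Fin 3)) (y.2.val) (z.2.val)
    have tx0z := dist_triangle (x.2.val) (0 : EuclideanSpace ℝ (Fin 3)) (z.2.val)
    have h0y : (0:ℝ) ≤ dist (0 : EuclideanSpace ℝ (Fin 3)) (y.2.val) := dist_nonneg
    have hy0 : (0:ℝ) ≤ dist (y.2.val) (0 : EuclideanSpace ℝ (Fin 3)) := dist_nonneg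
    have hcy : dist (y.2.val) (0 : EuclideanSpace ℝ (Fin 3))
        = dist (0 : EuclideanSpace ℝ (Fin 3)) (y.2.val) := dist_comm _ _
    split_ifs with h1 h2 h3 h3' h2' h3'' h3'''
    all_goals
      first
        | exact absurd (‹x.1 = y.1›.trans ‹y.1 = z.1›) ‹¬ x.1 = z.1›
        | exact absurd (‹x.1 = y.1›.symm.trans ‹x.1 = z.1›) ‹¬ y.1 = z.1›
        | exact absurd (‹x.1 = z.1›.trans ‹y.1 = z.1›.symm) ‹¬ x.1 = y.1›
        | linarith
  eq_of_dist_eq_zero := by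
    rintro ⟨x⟩ ⟨y⟩ h
    replace h : preDist x y = 0 := h
    unfold preDist at h
    apply Quotient.sound
    by_cases hxy : x.1 = y.1
    · rw [if_pos hxy] at h
      left
      obtain ⟨a, xv⟩ := x
      obtain ⟨b, yv⟩ := y
      cases hxy
      have : xv = yv := Subtype.ext (by simpa using dist_eq_zero.mp h)
      rw [this]
    · rw [if_neg hxy] at h
      right
      have hx0 : (0:ℝ) ≤ dist (x.2.val) (0 : EuclideanSpace ℝ (Fin 3)) := dist_nonneg
      have h0y : (0:ℝ) ≤ dist (0 : EuclideanSpace ℝ (Fin 3)) (y.2.val) := dist_nonneg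
      have h1 : dist (x.2.val) (0 : EuclideanSpace ℝ (Fin 3)) = 0 := by linarith
      have h2 : dist (0 : EuclideanSpace ℝ (Fin 3)) (y.2.val) = 0 := by linarith
      exact ⟨dist_eq_zero.mp h1, (dist_eq_zero.mp h2).symm⟩

/-- The wedge point `∘` of the `ι`-fold Griffiths space. -/
def basept {ι : Type} (a : ι) : GS ι := ⟦⟨a, ⟨0, zero_mem_GS1set⟩⟩⟧

lemma basept_eq {ι : Type} (a b : ι) : basept a = basept b :=
  Quotient.sound (Or.inr ⟨rfl, rfl⟩)

end Griffiths

namespace Griffiths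

/-- The cone tip `(0,0,1)` of `𝔾𝕊₁`. -/
def coneTip : EuclideanSpace ℝ (Fin 3) := WithLp.toLp 2 (fun i => if i = 2 then 1 else 0)

lemma coneTip_mem_GS1set : coneTip ∈ GS1set := by
  have h1 : (1:ℝ) ∈ Set.Icc (0:ℝ) 1 := by norm_num
  refine Set.mem_biUnion h1 (Set.mem_iUnion.2 ⟨0, ?_, ?_⟩) <;> simp [coneTip]

/-- The set of cone tips of the `ι`-fold Griffiths space. -/
def coneTips (ι : Type) : Set (GS ι) :=
  {p | ∃ α : ι, p = ⟦⟨α, ⟨coneTip, coneTip_mem_GS1set⟩⟩⟧}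

/-- The wedge `𝔼_κ` of the copies of the Hawaiian earring inside the `ι`-fold Griffiths
space: the points of height `0`. -/
def earringWedge (ι : Type) : Set (GS ι) :=
  {p | ∃ a : Σ _ : ι, GS1set, ⟦a⟧ = p ∧ a.2.val 2 = 0}

/-!
A point of the cone at height `r < 1` lies on the segment from the tip `(0,0,1)` to a point of
the earring, and the homothety about the tip with ratio `(1 - (1 - s) r) / (1 - r)` slides it
along that segment to height `(1 - s) r` without leaving the cone. At `s = 1` every point lands
on the earring, and points of height `0` never move. Doing this in every copy is compatible with
the wedge identification because the wedge point has height `0`. Away from the wedge point the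
deformation is continuous copy by copy; at the wedge point continuity is uniform over the copies
because near the base the slide moves a point by at most a fixed multiple of its norm.
-/

local notation "ℝ³" => EuclideanSpace ℝ (Fin 3)

lemma mem_GS1set_iff {x : ℝ³} :
    x ∈ GS1set ↔ ∃ r ∈ Icc (0 : ℝ) 1, ∃ n : ℕ,
      x 0 ^ 2 + (x 1 - (1 - r) / (n + 3)) ^ 2 = ((1 - r) / (n + 3)) ^ 2 ∧ x 2 = r := by
  simp only [GS1set, mem_iUnion, mem_ofPred_eq, exists_prop]

lemma height_mem_Icc_of_mem_GS1set {x : ℝ³} (hx : x ∈ GS1set) : x 2 ∈ Icc (0 : ℝ) 1 := by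
  obtain ⟨r, hr, n, -, rfl⟩ := mem_GS1set_iff.1 hx
  exact hr

@[simp] lemma coneTip_apply_zero : coneTip 0 = 0 := rfl
@[simp] lemma coneTip_apply_one : coneTip 1 = 0 := rfl
@[simp] lemma coneTip_apply_two : coneTip 2 = 1 := rfl

lemma eq_coneTip_of_height_eq_one {x : ℝ³} (hx : x ∈ GS1set) (h : x 2 = 1) :
    x = coneTip := by
  obtain ⟨r, -, n, hcirc, rfl⟩ := mem_GS1set_iff.1 hx
  rw [h, sub_self, zero_div] at hcirc
  have h0 : x 0 = 0 := by nlinarith [sq_nonneg (x 0), sq_nonneg (x 1)]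
  have h1 : x 1 = 0 := by nlinarith [sq_nonneg (x 0), sq_nonneg (x 1)]
  ext i
  fin_cases i <;> simp [h0, h1, h]

lemma homothety_coneTip_apply (t : ℝ) (x : ℝ³) (i : Fin 3) :
    AffineMap.homothety coneTip t x i = t * x i + (1 - t) * coneTip i := by
  simp only [AffineMap.homothety_apply, vsub_eq_sub, vadd_eq_add, PiLp.add_apply,
    PiLp.smul_apply, PiLp.sub_apply, smul_eq_mul]
  ring

lemma homothety_coneTip_mem_GS1set {x : ℝ³} (hx : x ∈ GS1set) {t : ℝ} (ht : 0 ≤ t)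
    (ht' : t * (1 - x 2) ≤ 1) : AffineMap.homothety coneTip t x ∈ GS1set := by
  obtain ⟨r, hr, n, hcirc, rfl⟩ := mem_GS1set_iff.1 hx
  refine mem_GS1set_iff.2 ⟨1 - t * (1 - x 2), ⟨?_, ?_⟩, n, ?_, ?_⟩
  · linarith
  · nlinarith [hr.2]
  · simp only [homothety_coneTip_apply, coneTip_apply_zero, coneTip_apply_one]
    linear_combination t ^ 2 * hcirc
  · simp only [homothety_coneTip_apply, coneTip_apply_two]
    ring

/-- The ratio of the homothety about the cone tip taking height `r` to height `(1 - s) * r`;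
at `r = 1` it is `0`, so the tip stays fixed. -/
def slideRatio (r s : ℝ) : ℝ := (1 - (1 - s) * r) / (1 - r)

def slide (s : ℝ) (x : ℝ³) : ℝ³ := AffineMap.homothety coneTip (slideRatio (x 2) s) x

lemma slideRatio_mul {r : ℝ} (hr : r ≠ 1) (s : ℝ) :
    slideRatio r s * (1 - r) = 1 - (1 - s) * r :=
  div_mul_cancel₀ _ (sub_ne_zero.2 hr.symm)

lemma slideRatio_zero_left (s : ℝ) : slideRatio 0 s = 1 := by
  simp [slideRatio]

lemma slideRatio_zero_right {r : ℝ} (hr : r ≠ 1) : slideRatio r 0 = 1 := by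
  simpa [sub_eq_zero, hr.symm] using slideRatio_mul hr 0

lemma slide_apply_two {x : ℝ³} (hx : x 2 ≠ 1) (s : ℝ) : slide s x 2 = (1 - s) * x 2 := by
  rw [slide, homothety_coneTip_apply, coneTip_apply_two]
  linear_combination -slideRatio_mul hx s

lemma slide_of_height_eq_zero {x : ℝ³} (hx : x 2 = 0) (s : ℝ) : slide s x = x := by
  rw [slide, hx, slideRatio_zero_left, AffineMap.homothety_one, AffineMap.id_apply]

lemma slide_zero_right (s : ℝ) : slide s 0 = 0 :=
  slide_of_height_eq_zero rfl s

lemma slide_zero_left {x : ℝ³} (hx : x 2 ≠ 1) : slide 0 x = x := by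
  rw [slide, slideRatio_zero_right hx, AffineMap.homothety_one, AffineMap.id_apply]

lemma slide_mem_GS1set {x : ℝ³} (hx : x ∈ GS1set) {s : ℝ} (hs : s ∈ Icc (0 : ℝ) 1) :
    slide s x ∈ GS1set := by
  obtain ⟨h0, h1⟩ := height_mem_Icc_of_mem_GS1set hx
  apply homothety_coneTip_mem_GS1set hx
  · exact div_nonneg (by nlinarith [hs.1, hs.2]) (by linarith)
  · rcases eq_or_ne (x 2) 1 with h | h
    · simp [h]
    · rw [slideRatio_mul h]
      nlinarith [hs.1, hs.2]

lemma norm_coneTip : ‖coneTip‖ = 1 := by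
  simp [EuclideanSpace.norm_eq, Fin.sum_univ_three]

/-- The bound comes from `1 - slideRatio r s = - s * r / (1 - r)`, which is `O(|r|)` for
`r ≤ 1 / 2`. -/
lemma norm_slide_le {x : ℝ³} (hx : ‖x‖ ≤ 1 / 2) {s : ℝ} (hs : s ∈ Icc (0 : ℝ) 1) :
    ‖slide s x‖ ≤ 4 * ‖x‖ := by
  have hr : |x 2| ≤ ‖x‖ := by simpa using PiLp.norm_apply_le x 2
  have hd : 1 / 2 ≤ 1 - x 2 := by linarith [le_abs_self (x 2)]
  have hratio : |1 - slideRatio (x 2) s| ≤ 2 * ‖x‖ := by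
    have : 1 - slideRatio (x 2) s = -(s * x 2) / (1 - x 2) := by
      rw [slideRatio]
      field_simp
      ring
    rw [this, abs_div, abs_neg, abs_mul, abs_of_nonneg hs.1,
      abs_of_pos (show (0 : ℝ) < 1 - x 2 by linarith), div_le_iff₀ (by linarith)]
    nlinarith [hs.1, hs.2, abs_nonneg (x 2)]
  have hslide : slide s x = x + (1 - slideRatio (x 2) s) • (coneTip - x) := by
    rw [slide, AffineMap.homothety_eq_lineMap, ← AffineMap.lineMap_apply_one_sub,
      AffineMap.lineMap_apply_module', add_comm]
  calc ‖slide s x‖ ≤ ‖x‖ + |1 - slideRatio (x 2) s| * ‖coneTip - x‖ := by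
        rw [hslide, ← Real.norm_eq_abs, ← norm_smul]
        exact norm_add_le _ _
    _ ≤ ‖x‖ + |1 - slideRatio (x 2) s| * (1 + ‖x‖) := by
        gcongr
        simpa [norm_coneTip] using norm_sub_le coneTip x
    _ ≤ 4 * ‖x‖ := by nlinarith [norm_nonneg x]

lemma continuousAt_slide {x₀ : ℝ³} (hx₀ : x₀ 2 ≠ 1) (s₀ : ℝ) :
    ContinuousAt (fun q : ℝ³ × ℝ => slide q.2 q.1) (x₀, s₀) := by
  have hratio : ContinuousAt (fun q : ℝ³ × ℝ => slideRatio (q.1 2) q.2) (x₀, s₀) :=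
    ContinuousAt.div (by fun_prop) (by fun_prop) (sub_ne_zero.2 hx₀.symm)
  simp only [slide, AffineMap.homothety_eq_lineMap, AffineMap.lineMap_apply_module]
  exact ((continuousAt_const.sub hratio).smul continuousAt_const).add
    (hratio.smul continuousAt_fst)

section Wedge

variable {ι : Type}

def ofCopy (α : ι) (u : GS1set) : GS ι := ⟦⟨α, u⟩⟧

lemma exists_ofCopy_eq (x : GS ι) : ∃ α u, ofCopy α u = x := by
  obtain ⟨⟨α, u⟩, rfl⟩ := Quotient.exists_rep x
  exact ⟨α, u, rfl⟩

lemma ofCopy_eq_basept {α : ι} {u : GS1set} (h : u.val = 0) : ofCopy α u = basept α :=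
  Quotient.sound (Or.inr ⟨h, rfl⟩)

def height : GS ι → ℝ :=
  Quotient.lift (fun a => a.2.val 2) <| by
    rintro a b (rfl | ⟨ha, hb⟩)
    · rfl
    · simp only [ha, hb]

lemma height_mem_Icc (x : GS ι) : height x ∈ Icc (0 : ℝ) 1 := by
  obtain ⟨α, u, rfl⟩ := exists_ofCopy_eq x
  exact height_mem_Icc_of_mem_GS1set u.2

lemma height_basept (α : ι) : height (basept α) = 0 := rfl

lemma mem_earringWedge_iff {x : GS ι} : x ∈ earringWedge ι ↔ height x = 0 := by
  constructor
  · rintro ⟨a, rfl, ha⟩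
    exact ha
  · intro hx
    obtain ⟨a, rfl⟩ := Quotient.exists_rep x
    exact ⟨a, rfl, hx⟩

lemma mem_coneTips_iff {x : GS ι} : x ∈ coneTips ι ↔ height x = 1 := by
  constructor
  · rintro ⟨α, rfl⟩
    exact coneTip_apply_two
  · intro hx
    obtain ⟨α, u, rfl⟩ := exists_ofCopy_eq x
    obtain rfl : u = ⟨coneTip, coneTip_mem_GS1set⟩ :=
      Subtype.ext (eq_coneTip_of_height_eq_one u.2 hx)
    exact ⟨α, rfl⟩

def deform (s : Icc (0 : ℝ) 1) : GS ι → GS ι :=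
  Quotient.map (fun a => ⟨a.1, slide s a.2, slide_mem_GS1set a.2.2 s.2⟩) <| by
    rintro a b (rfl | ⟨ha, hb⟩)
    · exact Or.inl rfl
    · exact Or.inr ⟨ha ▸ slide_zero_right s, hb ▸ slide_zero_right s⟩

lemma deform_ofCopy (s : Icc (0 : ℝ) 1) (α : ι) (u : GS1set) :
    deform s (ofCopy α u) = ofCopy α ⟨slide s u, slide_mem_GS1set u.2 s.2⟩ := rfl

lemma height_deform {x : GS ι} (hx : height x ≠ 1) (s : Icc (0 : ℝ) 1) :
    height (deform s x) = (1 - s) * height x := by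
  obtain ⟨α, u, rfl⟩ := exists_ofCopy_eq x
  exact slide_apply_two hx s

lemma deform_of_height_eq_zero {x : GS ι} (hx : height x = 0) (s : Icc (0 : ℝ) 1) :
    deform s x = x := by
  obtain ⟨α, u, rfl⟩ := exists_ofCopy_eq x
  rw [deform_ofCopy]
  congr
  exact slide_of_height_eq_zero hx s

lemma deform_zero {x : GS ι} (hx : height x ≠ 1) : deform 0 x = x := by
  obtain ⟨α, u, rfl⟩ := exists_ofCopy_eq x
  rw [deform_ofCopy]
  congr
  exact slide_zero_left hx

lemma deform_notMem_coneTips {x : GS ι} (hx : x ∉ coneTips ι) (s : Icc (0 : ℝ) 1) :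
    deform s x ∉ coneTips ι := by
  rw [mem_coneTips_iff] at hx ⊢
  rw [height_deform hx]
  have hlt : height x < 1 := (height_mem_Icc x).2.lt_of_ne hx
  nlinarith [(height_mem_Icc x).1, s.2.1, s.2.2]

lemma dist_ofCopy_ofCopy_same (α : ι) (u v : GS1set) :
    dist (ofCopy α u) (ofCopy α v) = dist u v := by
  show preDist _ _ = _
  rw [preDist, if_pos rfl]
  rfl

lemma dist_ofCopy_ofCopy_of_ne {α β : ι} (h : α ≠ β) (u v : GS1set) :
    dist (ofCopy α u) (ofCopy β v) = ‖u.val‖ + ‖v.val‖ := by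
  show preDist _ _ = _
  rw [preDist, if_neg h, dist_zero_right, dist_zero_left]

lemma dist_ofCopy_basept (α β : ι) (u : GS1set) :
    dist (ofCopy β u) (basept α) = ‖u.val‖ := by
  rw [basept_eq α β, basept, ← ofCopy, dist_ofCopy_ofCopy_same, Subtype.dist_eq,
    dist_zero_right]

lemma isometry_ofCopy (α : ι) : Isometry (ofCopy α) :=
  Isometry.of_dist_eq (dist_ofCopy_ofCopy_same α)

open Classical in
def copyProj (α : ι) : GS ι → GS1set :=
  Quotient.lift (fun a => if a.1 = α then a.2 else ⟨0, zero_mem_GS1set⟩) <| by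
    rintro a b (rfl | ⟨ha, hb⟩)
    · rfl
    · apply Subtype.ext
      split_ifs <;> simp [ha, hb]

lemma copyProj_ofCopy_self (α : ι) (u : GS1set) : copyProj α (ofCopy α u) = u := by
  simp [copyProj, ofCopy]

lemma copyProj_ofCopy_of_ne {α β : ι} (h : β ≠ α) (u : GS1set) :
    copyProj α (ofCopy β u) = ⟨0, zero_mem_GS1set⟩ := by
  simp [copyProj, ofCopy, h]

lemma lipschitzWith_copyProj (α : ι) : LipschitzWith 1 (copyProj (ι := ι) α) := by
  refine LipschitzWith.of_dist_le_mul fun x y => ?_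
  obtain ⟨β, u, rfl⟩ := exists_ofCopy_eq x
  obtain ⟨γ, v, rfl⟩ := exists_ofCopy_eq y
  rw [NNReal.coe_one, one_mul]
  by_cases hβ : β = α <;> by_cases hγ : γ = α
  · subst hβ hγ
    rw [copyProj_ofCopy_self, copyProj_ofCopy_self, dist_ofCopy_ofCopy_same]
  · subst hβ
    rw [copyProj_ofCopy_self, copyProj_ofCopy_of_ne hγ, dist_ofCopy_ofCopy_of_ne (Ne.symm hγ),
      Subtype.dist_eq, dist_zero_right]
    exact le_add_of_nonneg_right (norm_nonneg _)
  · subst hγ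
    rw [copyProj_ofCopy_of_ne hβ, copyProj_ofCopy_self, dist_ofCopy_ofCopy_of_ne hβ,
      Subtype.dist_eq, dist_zero_left]
    exact le_add_of_nonneg_left (norm_nonneg _)
  · rw [copyProj_ofCopy_of_ne hβ, copyProj_ofCopy_of_ne hγ, dist_self]
    exact dist_nonneg

lemma ofCopy_copyProj {α : ι} {x : GS ι} (hx : (copyProj α x).val ≠ 0) :
    ofCopy α (copyProj α x) = x := by
  obtain ⟨β, u, rfl⟩ := exists_ofCopy_eq x
  by_cases hβ : β = α
  · subst hβ
    rw [copyProj_ofCopy_self]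
  · rw [copyProj_ofCopy_of_ne hβ] at hx
    exact absurd rfl hx

lemma dist_deform_basept_le (α : ι) {x : GS ι} (hx : dist x (basept α) ≤ 1 / 2)
    (s : Icc (0 : ℝ) 1) : dist (deform s x) (basept α) ≤ 4 * dist x (basept α) := by
  obtain ⟨β, u, rfl⟩ := exists_ofCopy_eq x
  rw [dist_ofCopy_basept] at hx ⊢
  rw [deform_ofCopy, dist_ofCopy_basept]
  exact norm_slide_le hx s.2

open Filter Topology

lemma continuousAt_deform_basept (α : ι) (s₀ : Icc (0 : ℝ) 1) :
    ContinuousAt (fun q : GS ι × Icc (0 : ℝ) 1 => deform q.2 q.1) (basept α, s₀) := by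
  have hx : Tendsto (fun q : GS ι × Icc (0 : ℝ) 1 => dist q.1 (basept α))
      (𝓝 (basept α, s₀)) (𝓝 0) :=
    (continuous_fst.dist continuous_const).tendsto' _ _ (dist_self _)
  show Tendsto _ _ (𝓝 (deform s₀ (basept α)))
  rw [deform_of_height_eq_zero (height_basept α), tendsto_iff_dist_tendsto_zero]
  refine squeeze_zero' (Eventually.of_forall fun _ => dist_nonneg) ?_
    (by simpa using hx.const_mul 4)
  filter_upwards [hx.eventually (ge_mem_nhds one_half_pos)] with q hq
  exact dist_deform_basept_le α hq q.2

/-- Off the wedge point a neighbourhood lies in a single copy, where the deformation is the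
slide read through `copyProj`. -/
lemma continuousAt_deform_ofCopy {α : ι} {u₀ : GS1set} (h0 : u₀.val ≠ 0)
    (h1 : u₀.val 2 ≠ 1) (s₀ : Icc (0 : ℝ) 1) :
    ContinuousAt (fun q : GS ι × Icc (0 : ℝ) 1 => deform q.2 q.1) (ofCopy α u₀, s₀) := by
  have hproj : Continuous fun x : GS ι => (copyProj α x).val :=
    continuous_subtype_val.comp (lipschitzWith_copyProj α).continuous
  have hcopy : {x : GS ι | (copyProj α x).val ≠ 0} ∈ 𝓝 (ofCopy α u₀) :=
    (isOpen_ne.preimage hproj).mem_nhds (by simpa [copyProj_ofCopy_self] using h0)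
  have hslide : ContinuousAt (fun q : GS ι × Icc (0 : ℝ) 1 => slide q.2 (copyProj α q.1))
      (ofCopy α u₀, s₀) :=
    (continuousAt_slide h1 s₀).comp_of_eq
      (f := fun q : GS ι × Icc (0 : ℝ) 1 => ((copyProj α q.1).val, q.2.val))
      ((hproj.comp continuous_fst).prodMk (continuous_subtype_val.comp continuous_snd)).continuousAt
      (by rw [copyProj_ofCopy_self])
  have hmem (q : GS ι × Icc (0 : ℝ) 1) : slide q.2 (copyProj α q.1) ∈ GS1set :=
    slide_mem_GS1set (copyProj α q.1).2 q.2.2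
  refine ((isometry_ofCopy α).continuous.continuousAt.comp
    (hslide.codRestrict hmem)).congr_of_eventuallyEq ?_
  filter_upwards [prod_mem_nhds hcopy univ_mem] with q hq
  conv_lhs => rw [← ofCopy_copyProj hq.1]
  rfl

lemma continuousAt_deform {x₀ : GS ι} (hx₀ : x₀ ∉ coneTips ι) (s₀ : Icc (0 : ℝ) 1) :
    ContinuousAt (fun q : GS ι × Icc (0 : ℝ) 1 => deform q.2 q.1) (x₀, s₀) := by
  obtain ⟨α, u₀, rfl⟩ := exists_ofCopy_eq x₀
  rcases eq_or_ne u₀.val 0 with h0 | h0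
  · rw [ofCopy_eq_basept h0]
    exact continuousAt_deform_basept α s₀
  · exact continuousAt_deform_ofCopy h0 (mem_coneTips_iff.not.1 hx₀) s₀

end Wedge

/-- **Lemma.** For every `κ ≥ 1`, the `κ`-fold Griffiths space with all cone tips removed,
`𝔾𝕊_κ'`, strongly deformation retracts onto `𝔼_κ`. -/
theorem GS_minus_tips_deformation_retract (ι : Type) :
    ∃ H : (↥((coneTips ι)ᶜ) × ↥(Set.Icc (0:ℝ) 1)) → ↥((coneTips ι)ᶜ),
      Continuous H ∧
      (∀ x, H (x, ⟨0, by norm_num⟩) = x) ∧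
      (∀ x, (H (x, ⟨1, by norm_num⟩)).val ∈ earringWedge ι) ∧
      (∀ x s, x.val ∈ earringWedge ι → H (x, s) = x) := by
  refine ⟨fun p => ⟨deform p.2 p.1, deform_notMem_coneTips p.1.2 p.2⟩, ?_, ?_, ?_, ?_⟩
  · refine (continuous_iff_continuousAt.2 fun p => ?_).subtype_mk _
    exact (continuousAt_deform p.1.2 p.2).comp (f := Prod.map Subtype.val id)
      (continuous_subtype_val.prodMap continuous_id).continuousAt
  · exact fun x => Subtype.ext (deform_zero (mem_coneTips_iff.not.1 x.2))
  · intro x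
    rw [mem_earringWedge_iff, height_deform (mem_coneTips_iff.not.1 x.2)]
    ring
  · exact fun x s hx => Subtype.ext (deform_of_height_eq_zero (mem_earringWedge_iff.1 hx) s)

end Griffiths
end
end

section
/- Let Θ be a totally ordered set, let Λ_θ be a totally ordered set for each θ ∈ Θ, and let Λ = ∏_{θ∈Θ} Λ_θ be their concatenation (lexicographic sum). Suppose Λ_{θ,0} ⊆ Λ_θ is given for each θ ∈ Θ, that Close({θ ∈ Θ : Λ_{θ,0} ≠ ∅}, Θ), and that Close(Λ_{θ,0}, Λ_θ) for every θ ∈ Θ. Then Close(⋃_{θ∈Θ} Λ_{θ,0}, Λ). -/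
/-!
An infinite interval `S` of the concatenation either has an infinite fibre over some `θ`, which
is an interval of `Λ θ` and so meets `A θ`, or has finite fibres and hence meets infinitely many
summands. In the second case closeness of `{θ | (A θ).Nonempty}` yields such a `θ` strictly
between two indices met by `S`, and then the whole summand over `θ` lies in `S`.
-/

/-- A subset `A` of a totally ordered set `X` is *close* in `X` if every infinite interval
(order-convex subset) of `X` meets `A`. -/
def Close {X : Type*} [LinearOrder X] (A : Set X) : Prop :=
  ∀ S : Set X, S.OrdConnected → S.Infinite → (S ∩ A).Nonempty

open Set

section Between

variable {α : Type*} [LinearOrder α]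

theorem Set.ordConnected_setOf_exists_lt_lt (T : Set α) :
    {a | ∃ t₁ ∈ T, ∃ t₂ ∈ T, t₁ < a ∧ a < t₂}.OrdConnected :=
  ⟨fun _ ⟨t₁, ht₁, _, _, hlt₁, _⟩ _ ⟨_, _, t₂, ht₂, _, hlt₂⟩ _ hb =>
    ⟨t₁, ht₁, t₂, ht₂, hlt₁.trans_le hb.1, hb.2.trans_lt hlt₂⟩⟩

theorem Set.Infinite.setOf_exists_lt_lt {T : Set α} (hT : T.Infinite) :
    {a | ∃ t₁ ∈ T, ∃ t₂ ∈ T, t₁ < a ∧ a < t₂}.Infinite := by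
  have hleast : {a | IsLeast T a}.Subsingleton := fun _ ha _ hb => ha.unique hb
  have hgreatest : {a | IsGreatest T a}.Subsingleton := fun _ ha _ hb => ha.unique hb
  refine (hT.sdiff (hleast.finite.union hgreatest.finite)).mono ?_
  rintro a ⟨haT, hend⟩
  simp only [mem_union, mem_ofPred_eq, not_or, IsLeast, IsGreatest, mem_lowerBounds,
    mem_upperBounds, haT, true_and, not_forall, not_le] at hend
  obtain ⟨⟨t₁, ht₁, hlt₁⟩, ⟨t₂, ht₂, hlt₂⟩⟩ := hend
  exact ⟨t₁, ht₁, t₂, ht₂, hlt₁, hlt₂⟩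

theorem Close.exists_mem_between {A T : Set α} (hA : Close A) (hT : T.Infinite) :
    ∃ a ∈ A, ∃ t₁ ∈ T, ∃ t₂ ∈ T, t₁ < a ∧ a < t₂ := by
  obtain ⟨a, hbetween, haA⟩ :=
    hA _ (Set.ordConnected_setOf_exists_lt_lt T) hT.setOf_exists_lt_lt
  exact ⟨a, haA, hbetween⟩

end Between

section LexSigma

variable {Θ : Type*} {Λ : Θ → Type*}

theorem Sigma.Lex.monotone_toLex_mk [Preorder Θ] [∀ θ, Preorder (Λ θ)] (θ : Θ) :
    Monotone fun x : Λ θ => toLex (⟨θ, x⟩ : Σ θ, Λ θ) :=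
  fun _ _ h => Sigma.Lex.right _ _ h

theorem Set.Infinite.exists_infinite_fiber_or_infinite_image_fst
    {S : Set (Lex (Σ θ, Λ θ))} (hS : S.Infinite) :
    (∃ θ, ((fun x : Λ θ => toLex (⟨θ, x⟩ : Σ θ, Λ θ)) ⁻¹' S).Infinite) ∨
      ((fun p => (ofLex p).1) '' S).Infinite := by
  by_contra! hfin
  obtain ⟨hfibers, hindices⟩ := hfin
  refine hS ((hindices.biUnion fun θ _ =>
    (hfibers θ).image fun x => toLex (⟨θ, x⟩ : Σ θ, Λ θ)).subset ?_)
  rintro ⟨θ, x⟩ hx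
  exact mem_biUnion (mem_image_of_mem _ hx) ⟨x, hx, rfl⟩

end LexSigma

/-- **Lemma (closeness in a lexicographic sum).** Let `Θ` be a totally ordered index set,
`Λ θ` totally ordered sets, and `Λ = ∏_{θ∈Θ} Λ_θ` their concatenation (the lexicographic
sum, `Lex (Σ θ, Λ θ)`).  If the set of `θ` with `A θ ≠ ∅` is close in `Θ` and each `A θ` is
close in `Λ θ`, then `⋃_θ A θ` is close in `Λ`. -/
theorem close_lex_sum
    (Θ : Type*) [LinearOrder Θ] (Λ : Θ → Type*) [∀ θ, LinearOrder (Λ θ)]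
    (A : ∀ θ, Set (Λ θ))
    (hΘ : Close {θ : Θ | (A θ).Nonempty})
    (hA : ∀ θ, Close (A θ)) :
    Close {p : Lex (Σ θ, Λ θ) | (ofLex p).2 ∈ A (ofLex p).1} := by
  intro S hS hSinf
  rcases hSinf.exists_infinite_fiber_or_infinite_image_fst with ⟨θ, hfiber⟩ | hindices
  · obtain ⟨x, hxS, hxA⟩ :=
      hA θ _ (hS.preimage_mono (Sigma.Lex.monotone_toLex_mk θ)) hfiber
    exact ⟨_, hxS, hxA⟩
  · obtain ⟨θ, ⟨x, hxA⟩, _, ⟨p, hp, rfl⟩, _, ⟨q, hq, rfl⟩, hpθ, hθq⟩ :=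
      hΘ.exists_mem_between hindices
    exact ⟨toLex ⟨θ, x⟩,
      hS.out hp hq ⟨(Sigma.Lex.lt_def.2 (Or.inl hpθ)).le, (Sigma.Lex.lt_def.2 (Or.inl hθq)).le⟩,
      hxA⟩
end
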